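/- arXiv:1910.14154 — 3 statements merged into one kernel-verified Lean document; each statement's English description precedes it below -/
import Mathlib

section
/- For every l ≥ 1 and every sequence of reals r ≥ x₁ ≥ x₂ ≥ ... ≥ x_l ≥ 0 with r > 0, the quantity f((x₁,...,x_l), r) := x₁·(2/r) + Σ_{k=2}^{l} x_k·(2^k/r)·∏_{j=1}^{k-1} exp(−x_j·2^j/r) is at most 5. -/
open Finset

/-- `f((x₁,...,x_l), r) = x₁·(2/r) + Σ_{k=2}^{l} x_k·(2^k/r)·∏_{j=1}^{k-1} exp(−x_j·2^j/r)`,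
with the list entry `L[k-1]` playing the role of `x_k`. -/
noncomputable def f (L : List ℝ) (r : ℝ) : ℝ :=
  ∑ k ∈ Finset.range L.length,
    L.getD k 0 * (2 ^ (k + 1) / r) *
      ∏ j ∈ Finset.range k, Real.exp (-(L.getD j 0 * 2 ^ (j + 1) / r))

/-!
Peeling off the first entry gives `f (x :: M) r = t + e^{-t} f M (r/2)` with `t = 2x/r`: doubling
the later entries, as in the paper's identity, is the same as halving `r`. Induction on the list
then shows `f L r ≤ 2 x₁/r + 3`: the tail contributes at most `e^{-t} (2t + 3) ≤ 3` because its
first entry is at most `x₁`, and `3 e^t ≥ 3 + 3t ≥ 2t + 3` for `t ≥ 0`. Finally `x₁ ≤ r`.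
-/

lemma f_nil (r : ℝ) : f [] r = 0 := rfl

lemma f_cons (x : ℝ) (M : List ℝ) (r : ℝ) :
    f (x :: M) r = x * (2 / r) + Real.exp (-(x * 2 / r)) * f M (r / 2) := by
  rw [f, f, List.length_cons, sum_range_succ', mul_sum, add_comm]
  congr 1
  · simp
  · refine sum_congr rfl fun k _ => ?_
    simp only [List.getD_cons_zero, List.getD_cons_succ, prod_range_succ']
    ring_nf

lemma exp_neg_mul_two_mul_add_three_le {t : ℝ} (ht : 0 ≤ t) :
    Real.exp (-t) * (2 * t + 3) ≤ 3 := by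
  rw [Real.exp_neg, inv_mul_le_iff₀ (Real.exp_pos t)]
  nlinarith [Real.add_one_le_exp t]

lemma f_le_two_mul_headD_div_add_three (L : List ℝ) {r : ℝ} (hr : 0 < r)
    (hchain : L.IsChain (· ≥ ·)) (hnonneg : ∀ x ∈ L, 0 ≤ x) :
    f L r ≤ 2 * L.headD 0 / r + 3 := by
  induction L generalizing r with
  | nil => simp [f_nil]
  | cons x M ih =>
    have hx : 0 ≤ x := hnonneg x List.mem_cons_self
    have hhead : M.headD 0 ≤ x := by
      cases M with
      | nil => exact hx
      | cons y M => exact (List.isChain_cons_cons.1 hchain).1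
    have htail : f M (r / 2) ≤ 2 * (2 * x / r) + 3 := by
      calc f M (r / 2) ≤ 2 * M.headD 0 / (r / 2) + 3 :=
            ih (by positivity) (List.isChain_cons.1 hchain).2
              fun y hy => hnonneg y (List.mem_cons_of_mem x hy)
        _ = 2 * (2 * M.headD 0 / r) + 3 := by ring
        _ ≤ 2 * (2 * x / r) + 3 := by gcongr
    set t := 2 * x / r with ht_def
    have ht : 0 ≤ t := by positivity
    calc f (x :: M) r = t + Real.exp (-t) * f M (r / 2) := by
          rw [f_cons, ht_def]; ring_nf
      _ ≤ t + Real.exp (-t) * (2 * t + 3) := by gcongr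
      _ ≤ t + 3 := by linarith [exp_neg_mul_two_mul_add_three_le ht]
      _ = 2 * (x :: M).headD 0 / r + 3 := rfl

theorem stmt1_general (L : List ℝ) (r : ℝ) (hr : 0 < r)
    (hchain : L.Chain' (· ≥ ·)) (hle : ∀ x ∈ L, x ≤ r) (hnonneg : ∀ x ∈ L, 0 ≤ x) :
    f L r ≤ 5 := by
  have hhead : L.headD 0 ≤ r := by
    cases L with
    | nil => exact hr.le
    | cons x M => exact hle x List.mem_cons_self
  have : 2 * L.headD 0 / r ≤ 2 := by
    rw [div_le_iff₀ hr]; linarith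
  linarith [f_le_two_mul_headD_div_add_three L hr hchain hnonneg]

theorem stmt1 (L : List ℝ) (r : ℝ) (hL : L ≠ []) (hr : 0 < r)
    (hchain : L.Chain' (· ≥ ·)) (hle : ∀ x ∈ L, x ≤ r) (hnonneg : ∀ x ∈ L, 0 ≤ x) :
    f L r ≤ 5 :=
  stmt1_general L r hr hchain hle hnonneg
end

section
/- Let t ≥ 2 be a power of 2 and t ≥ n₁ ≥ ... ≥ n_{log t} ≥ 0 integers. With Y_k ~ Binomial(n_k, 2^k/t) independent and Y equal to the first nonzero Y_k (or 0 if all are zero), E[Y] ≤ 5. -/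
open MeasureTheory ProbabilityTheory Finset unitInterval Real

/-!
Let `B_k` be the event that `Y_j = 0` for all `j < k`. Then `Z = ∑ₖ Yₖ · 1_{B_k}`, and since `Yₖ`
is independent of `B_k`, `E[Z] = ∑ₖ nₖ pₖ ∏_{j<k} (1 - pⱼ)^{nⱼ}` with `pₖ = 2^{k+1}/t`. Writing
`aₖ = nₖ pₖ` and using `(1 - p)^n ≤ e^{-np}`, this is at most `∑ₖ aₖ e^{-(a₀ + ⋯ + a_{k-1})}`.
Since `n` is antitone, `a_{k+1} ≤ 2 aₖ`, and peeling off the first term with `2a + 3 ≤ 3eᵃ` bounds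
the sum by `a₀ + 3` by induction; finally `a₀ = 2 n₀ / t ≤ 2`.
-/

theorem sum_Iic_choose_mul_pow_mul_natCast {R : Type*} [CommRing R] (N : ℕ) (p : R) :
    ∑ k ∈ Iic N, (N.choose k * p ^ k * (1 - p) ^ (N - k)) * (k : R) = N * p := by
  rw [← Nat.range_succ_eq_Iic]
  cases N with
  | zero => simp
  | succ N =>
    have hterm (i : ℕ) : ((N + 1).choose (i + 1) * p ^ (i + 1) * (1 - p) ^ (N + 1 - (i + 1))) *
        ((i + 1 : ℕ) : R) = (N + 1) * p * (N.choose i * p ^ i * (1 - p) ^ (N - i)) := by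
      have hc := congrArg (Nat.cast : ℕ → R) (Nat.add_one_mul_choose_eq N i)
      push_cast at hc
      rw [Nat.add_sub_add_right]
      push_cast
      linear_combination (-(p ^ (i + 1) * (1 - p) ^ (N - i))) * hc
    have hmass : ∑ i ∈ range (N + 1), (N.choose i * p ^ i * (1 - p) ^ (N - i) : R) = 1 := by
      calc _ = (p + (1 - p)) ^ N := by rw [add_pow]; exact sum_congr rfl fun i _ => by ring
        _ = 1 := by rw [add_sub_cancel, one_pow]
    rw [sum_range_succ', sum_congr rfl fun i _ => hterm i, ← mul_sum, hmass]
    push_cast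
    ring

section Binomial

variable {Ω : Type*} [MeasurableSpace Ω] {μ : Measure Ω} {X : Ω → ℕ} {N : ℕ} {p : I}

theorem hasLaw_binomial_of_measure_eq (hX : Measurable X)
    (h : ∀ m, μ {ω | X ω = m} = ENNReal.ofReal (N.choose m * p ^ m * (1 - p) ^ (N - m))) :
    HasLaw X Bin(N, p) μ where
  aemeasurable := hX.aemeasurable
  map_eq := Measure.ext_of_singleton fun m => by
    rw [Measure.map_apply hX (measurableSet_singleton m), binomial_singleton]
    exact h m

theorem integrable_natCast_of_hasLaw_binomial (hX : HasLaw X Bin(N, p) μ) :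
    Integrable (fun ω => (X ω : ℝ)) μ := by
  have h : Integrable (fun m : ℕ => (m : ℝ)) (μ.map X) := hX.map_eq ▸ integrable_binomial _
  exact h.comp_aemeasurable hX.aemeasurable

theorem integral_natCast_of_hasLaw_binomial (hX : HasLaw X Bin(N, p) μ) :
    ∫ ω, (X ω : ℝ) ∂μ = N * p := by
  rw [← Function.comp_def, hX.integral_comp .of_discrete, integral_binomial]
  simp_rw [smul_eq_mul]
  exact sum_Iic_choose_mul_pow_mul_natCast N (p : ℝ)

theorem measureReal_eq_zero_of_hasLaw_binomial (hX : HasLaw X Bin(N, p) μ) :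
    μ.real {ω | X ω = 0} = (1 - p) ^ N := by
  rw [hX.measureReal_eq (p := (· = 0)) .of_discrete, Set.ofPred_eq_eq_singleton,
    binomial_real_zero]

end Binomial

section FirstNonzero

variable {ι : Type*} [Fintype ι] [LinearOrder ι] [LocallyFiniteOrderBot ι]

def IsFirstNonzero (y : ι → ℕ) (z : ℕ) : Prop :=
  ((∀ k, y k = 0) → z = 0) ∧ ∀ k, y k ≠ 0 → (∀ j, j < k → y j = 0) → z = y k

theorem prod_ite_lt_ite_eq {M : Type*} [CommMonoid M] (k : ι) (a c : ι → M) :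
    ∏ i, (if i < k then a i else if i = k then c i else 1) = c k * ∏ i ∈ Iio k, a i := by
  rw [prod_ite, prod_ite_eq', filter_gt_eq_Iio, mul_comm]
  simp

theorem IsFirstNonzero.natCast_eq_sum {y : ι → ℕ} {z : ℕ} (hz : IsFirstNonzero y z) :
    (z : ℝ) = ∑ k, (y k : ℝ) * ∏ j ∈ Iio k, (if y j = 0 then 1 else 0) := by
  obtain ⟨h0, h1⟩ := hz
  simp_rw [prod_boole, mem_Iio]
  by_cases hall : ∀ k, y k = 0
  · simp [h0 hall, hall]
  push Not at hall
  obtain ⟨k, hk⟩ := hall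
  obtain ⟨k₀, hk₀, hmin⟩ := (univ.filter fun k => y k ≠ 0).exists_min_image id
    ⟨k, mem_filter.2 ⟨mem_univ k, hk⟩⟩
  simp only [mem_filter, mem_univ, true_and, id] at hk₀ hmin
  have hbelow : ∀ j < k₀, y j = 0 := fun j hj =>
    by_contra fun h => absurd (hmin j h) (not_le.2 hj)
  rw [h1 k₀ hk₀ hbelow, sum_eq_single k₀]
  · rw [if_pos hbelow, mul_one]
  · intro k _ hk
    rcases hk.lt_or_gt with h | h
    · simp [hbelow k h]
    · simp only [mul_ite, mul_one, mul_zero, ite_eq_right_iff]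
      exact fun hall' => absurd (hall' k₀ h) hk₀
  · simp

variable {Ω : Type*} [MeasurableSpace Ω] {μ : Measure Ω}

theorem integral_of_isFirstNonzero {Y : ι → Ω → ℕ} (hY : ∀ k, Measurable (Y k))
    (hindep : iIndepFun Y μ) (hint : ∀ k, Integrable (fun ω => (Y k ω : ℝ)) μ)
    {Z : Ω → ℕ} (hZ : ∀ ω, IsFirstNonzero (Y · ω) (Z ω)) :
    ∫ ω, (Z ω : ℝ) ∂μ = ∑ k, (∫ ω, (Y k ω : ℝ) ∂μ) * ∏ j ∈ Iio k, μ.real {ω | Y j ω = 0} := by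
  have := hindep.isProbabilityMeasure
  simp_rw [(hZ _).natCast_eq_sum]
  rw [integral_finsetSum _ fun k _ => ?integrable]
  case integrable =>
    have hmeas : Measurable fun ω => ∏ j ∈ Iio k, (if Y j ω = 0 then (1 : ℝ) else 0) :=
      Finset.measurable_prod _ fun j _ =>
        Measurable.ite (hY j (measurableSet_singleton 0)) measurable_const measurable_const
    refine (hint k).mul_bdd (c := 1) hmeas.aestronglyMeasurable (.of_forall fun ω => ?_)
    rw [prod_boole]
    split_ifs <;> simp
  refine sum_congr rfl fun k _ => ?_
  -- Written as a product over all `i` of functions of `Y i` alone, the summand factors under `∫`.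
  let f (i : ι) (m : ℕ) : ℝ := if i < k then (if m = 0 then 1 else 0) else if i = k then m else 1
  have hprod (ω : Ω) : (Y k ω : ℝ) * ∏ j ∈ Iio k, (if Y j ω = 0 then 1 else 0) =
      ∏ i, f i (Y i ω) := (prod_ite_lt_ite_eq k _ fun i => (Y i ω : ℝ)).symm
  simp_rw [hprod]
  rw [hindep.integral_fun_prod_comp (fun i => (hY i).aemeasurable)
      (fun i => Measurable.of_discrete.aestronglyMeasurable),
    ← prod_ite_lt_ite_eq k (fun j => μ.real {ω | Y j ω = 0}) fun _ => ∫ ω, (Y k ω : ℝ) ∂μ]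
  refine prod_congr rfl fun i _ => ?_
  simp only [f]
  split_ifs with hlt heq
  · rw [← integral_indicator_one (s := {ω | Y i ω = 0}) (hY i (measurableSet_singleton 0))]
    simp only [Set.indicator_apply, Set.mem_ofPred_eq, Pi.one_apply]
  · subst heq; rfl
  · simp

end FirstNonzero

theorem Fin.prod_Iio_eq_prod_range {M : Type*} [CommMonoid M] {L : ℕ} (f : ℕ → M) (k : Fin L) :
    ∏ j ∈ Iio k, f j = ∏ j ∈ range k, f j := by
  rw [← Nat.Iio_eq_range, ← Fin.map_valEmbedding_Iio, prod_map]
  rfl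

theorem one_sub_pow_le_exp_neg_mul {p : ℝ} (hp : p ≤ 1) (n : ℕ) :
    (1 - p) ^ n ≤ exp (-(n * p)) := by
  calc (1 - p) ^ n ≤ exp (-p) ^ n := pow_le_pow_left₀ (by linarith) (one_sub_le_exp_neg p) n
    _ = exp (-(n * p)) := by rw [← exp_nat_mul, mul_neg]

theorem sum_range_mul_prod_exp_neg_le (L : ℕ) {a : ℕ → ℝ} (ha : ∀ i, 0 ≤ a i)
    (hstep : ∀ i, a (i + 1) ≤ 2 * a i) :
    ∑ k ∈ range L, a k * ∏ j ∈ range k, exp (-a j) ≤ a 0 + 3 := by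
  induction L generalizing a with
  | zero => simpa using add_nonneg (ha 0) zero_le_three
  | succ L ih =>
    have hshift := ih (fun i => ha (i + 1)) (fun i => hstep (i + 1))
    calc ∑ k ∈ range (L + 1), a k * ∏ j ∈ range k, exp (-a j)
        = a 0 + exp (-a 0) * ∑ k ∈ range L, a (k + 1) * ∏ j ∈ range k, exp (-a (j + 1)) := by
          rw [sum_range_succ', add_comm, mul_sum]
          simp only [prod_range_zero, mul_one, prod_range_succ']
          exact congrArg _ (sum_congr rfl fun k _ => by ring)
      _ ≤ a 0 + exp (-a 0) * (2 * a 0 + 3) := by gcongr; linarith [hstep 0]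
      _ ≤ a 0 + 3 := by
          have h : exp (-a 0) * (2 * a 0 + 3) ≤ 3 := by
            rw [exp_neg, inv_mul_le_iff₀ (exp_pos _)]
            nlinarith [ha 0, add_one_le_exp (a 0)]
          linarith

theorem two_pow_succ_div_le_one {L t : ℕ} (ht : t = 2 ^ L) (k : Fin L) :
    (2 : ℝ) ^ ((k : ℕ) + 1) / t ≤ 1 := by
  rw [div_le_one (by rw [ht]; positivity), ht]
  exact_mod_cast Nat.pow_le_pow_right two_pos k.isLt

theorem sum_mul_prod_one_sub_pow_le_five {L t : ℕ} (ht : t = 2 ^ L) {n : Fin L → ℕ}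
    (hnt : ∀ k, n k ≤ t) (hmono : Antitone n) :
    ∑ k : Fin L, n k * (2 ^ ((k : ℕ) + 1) / t : ℝ) *
      ∏ j ∈ Iio k, (1 - 2 ^ ((j : ℕ) + 1) / t : ℝ) ^ n j ≤ 5 := by
  set a : ℕ → ℝ := fun i => if h : i < L then n ⟨i, h⟩ * (2 ^ (i + 1) / t) else 0
  have ha_fin (k : Fin L) : a k = n k * (2 ^ ((k : ℕ) + 1) / t) := by simp [a]
  have ha (i : ℕ) : 0 ≤ a i := by simp only [a]; split_ifs <;> positivity
  have hstep (i : ℕ) : a (i + 1) ≤ 2 * a i := by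
    by_cases h : i + 1 < L
    · have hn : (n ⟨i + 1, h⟩ : ℝ) ≤ n ⟨i, by omega⟩ := by
        exact_mod_cast hmono (Fin.mk_le_mk.2 (Nat.le_succ i))
      simp only [a, dif_pos h, dif_pos (show i < L by omega)]
      calc _ ≤ (n ⟨i, by omega⟩ : ℝ) * (2 ^ (i + 1 + 1) / t) := by gcongr
        _ = _ := by ring
    · simp only [a, dif_neg h]
      linarith [ha i]
  have ha0 : a 0 ≤ 2 := by
    simp only [a]
    split_ifs with h
    · have hn : (n ⟨0, h⟩ : ℝ) ≤ t := by exact_mod_cast hnt _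
      have ht0 : (t : ℝ) ≠ 0 := by rw [ht]; positivity
      calc _ ≤ (t : ℝ) * (2 ^ (0 + 1) / t) := by gcongr
        _ = 2 := by field_simp; norm_num
    · norm_num
  have hp := two_pow_succ_div_le_one ht
  calc _ ≤ ∑ k : Fin L, a k * ∏ j ∈ Iio k, exp (-a j) := by
        refine sum_le_sum fun k _ => ?_
        rw [ha_fin]
        refine mul_le_mul_of_nonneg_left (prod_le_prod (fun j _ => ?_) fun j _ => ?_) (by positivity)
        · exact pow_nonneg (sub_nonneg.2 (hp j)) _
        · rw [ha_fin]
          exact one_sub_pow_le_exp_neg_mul (hp j) _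
    _ = ∑ k ∈ range L, a k * ∏ j ∈ range k, exp (-a j) := by
        simp only [Fin.prod_Iio_eq_prod_range fun j => exp (-a j),
          Fin.sum_univ_eq_sum_range fun k => a k * ∏ j ∈ range k, exp (-a j)]
    _ ≤ a 0 + 3 := sum_range_mul_prod_exp_neg_le L ha hstep
    _ ≤ 5 := by linarith

theorem stmt7_general {Ω : Type*} [MeasurableSpace Ω] (μ : Measure Ω)
    (t L : ℕ) (ht : t = 2 ^ L)
    (n : Fin L → ℕ) (hnt : ∀ k, n k ≤ t)
    (hmono : ∀ j k : Fin L, j ≤ k → n k ≤ n j)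
    (Y : Fin L → Ω → ℕ) (hYmeas : ∀ k, Measurable (Y k))
    (hindep : ProbabilityTheory.iIndepFun Y μ)
    (hdist : ∀ (k : Fin L) (m : ℕ),
      μ {ω | Y k ω = m} =
        ENNReal.ofReal ((n k).choose m * ((2 : ℝ) ^ ((k : ℕ) + 1) / t) ^ m *
          (1 - (2 : ℝ) ^ ((k : ℕ) + 1) / t) ^ (n k - m)))
    (Z : Ω → ℕ)
    (hZ0 : ∀ ω, (∀ k, Y k ω = 0) → Z ω = 0)
    (hZ1 : ∀ ω (k : Fin L), Y k ω ≠ 0 → (∀ j, j < k → Y j ω = 0) → Z ω = Y k ω) :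
    (∫ ω, (Z ω : ℝ) ∂μ) ≤ 5 := by
  have hp (k : Fin L) : (2 : ℝ) ^ ((k : ℕ) + 1) / t ∈ I :=
    ⟨by positivity, two_pow_succ_div_le_one ht k⟩
  have hbin (k : Fin L) : HasLaw (Y k) Bin(n k, ⟨_, hp k⟩) μ :=
    hasLaw_binomial_of_measure_eq (hYmeas k) (hdist k)
  rw [integral_of_isFirstNonzero hYmeas hindep
    (fun k => integrable_natCast_of_hasLaw_binomial (hbin k)) fun ω => ⟨hZ0 ω, hZ1 ω⟩]
  simp only [integral_natCast_of_hasLaw_binomial (hbin _),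
    measureReal_eq_zero_of_hasLaw_binomial (hbin _)]
  exact sum_mul_prod_one_sub_pow_le_five ht hnt hmono

/-- Expectation of the first nonzero among independent binomials `Y_k ~ Bin(n_k, 2^k/t)`
(index `k : Fin L` represents iteration `k+1`, with success probability `2^(k+1)/t`):
`E[Y] ≤ 5`. -/
theorem stmt7 {Ω : Type*} [MeasurableSpace Ω] (μ : Measure Ω) [IsProbabilityMeasure μ]
    (t L : ℕ) (ht : t = 2 ^ L) (hL : 1 ≤ L)
    (n : Fin L → ℕ) (hnt : ∀ k, n k ≤ t)
    (hmono : ∀ j k : Fin L, j ≤ k → n k ≤ n j)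
    (Y : Fin L → Ω → ℕ) (hYmeas : ∀ k, Measurable (Y k))
    (hindep : ProbabilityTheory.iIndepFun Y μ)
    (hdist : ∀ (k : Fin L) (m : ℕ),
      μ {ω | Y k ω = m} =
        ENNReal.ofReal ((n k).choose m * ((2 : ℝ) ^ ((k : ℕ) + 1) / t) ^ m *
          (1 - (2 : ℝ) ^ ((k : ℕ) + 1) / t) ^ (n k - m)))
    (Z : Ω → ℕ) (hZmeas : Measurable Z)
    (hZ0 : ∀ ω, (∀ k, Y k ω = 0) → Z ω = 0)
    (hZ1 : ∀ ω (k : Fin L), Y k ω ≠ 0 → (∀ j, j < k → Y j ω = 0) → Z ω = Y k ω) :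
    (∫ ω, (Z ω : ℝ) ∂μ) ≤ 5 :=
  stmt7_general μ t L ht n hnt hmono Y hYmeas hindep hdist Z hZ0 hZ1
end

section
/- Suppose a randomized algorithm adds a collection C of sets to a partial cover, where every added set had at least s/2 uncovered elements at the moment it was added, and for each element e let X_e denote the number of sets added in the same step in which e was first covered (X_e = 0 if e stays uncovered). Then (s/2)·|C| ≤ Σ_{e ∈ E} X_e, and consequently if E[X_e] ≤ 5 for all e, then E[|C|] ≤ 10·n/s where n = |E|. -/
open MeasureTheory Finset

/-- Double counting in the cover analysis.  In each outcome `ω`, a collection `C ω` of sets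
is added to the partial cover; `step ω T` is the step at which `T` was added, `fc ω e` is
the step at which element `e` was first covered, and
`X e ω = #{T ∈ C ω : e ∈ T and step ω T = fc ω e}` counts the sets added in the step in
which `e` was first covered.  If every added set had at least `s/2` elements still
uncovered at the moment it was added (and adding it covers them at that step), then
`(s/2)·|C| ≤ Σ_e X_e` pointwise, and consequently `E[X_e] ≤ 5` for all `e` implies
`E[|C|] ≤ 10·n/s` where `n` is the number of elements. -/
theorem stmt17 {α : Type*} [Fintype α] [DecidableEq α]
    {Ω : Type*} [MeasurableSpace Ω] (μ : Measure Ω) [IsProbabilityMeasure μ]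
    (s : ℝ) (hs : 0 < s)
    (C : Ω → Finset (Finset α)) (step : Ω → Finset α → ℕ) (fc : Ω → α → ℕ)
    (X : α → Ω → ℕ)
    (hX : ∀ e ω, X e ω = ((C ω).filter (fun T => e ∈ T ∧ step ω T = fc ω e)).card)
    (hlarge : ∀ ω, ∀ T ∈ C ω, s / 2 ≤ ((T.filter (fun e => step ω T ≤ fc ω e)).card : ℝ))
    (hcovers : ∀ ω, ∀ T ∈ C ω, ∀ e ∈ T, step ω T ≤ fc ω e → fc ω e = step ω T)
    (hCint : Integrable (fun ω => ((C ω).card : ℝ)) μ)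
    (hXint : ∀ e, Integrable (fun ω => (X e ω : ℝ)) μ)
    (hXexp : ∀ e, ∫ ω, (X e ω : ℝ) ∂μ ≤ 5) :
    (∀ ω, s / 2 * ((C ω).card : ℝ) ≤ ∑ e : α, (X e ω : ℝ)) ∧
      ∫ ω, ((C ω).card : ℝ) ∂μ ≤ 10 * (Fintype.card α : ℝ) / s := by
  have key : ∀ ω, s / 2 * ((C ω).card : ℝ) ≤ ∑ e : α, (X e ω : ℝ) := by
    intro ω
    have h1 : ∀ T ∈ C ω, T.filter (fun e => step ω T ≤ fc ω e) =
        T.filter (fun e => step ω T = fc ω e) := by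
      intro T hT
      apply Finset.filter_congr
      intro e he
      exact ⟨fun h => (hcovers ω T hT e he h).symm, fun h => h.le⟩
    have h2 : (∑ e : α, X e ω) =
        ∑ T ∈ C ω, (T.filter (fun e => step ω T = fc ω e)).card := by
      simp only [hX, Finset.card_filter]
      rw [Finset.sum_comm]
      refine Finset.sum_congr rfl fun T hT => ?_
      rw [← Finset.card_filter, ← Finset.card_filter]
      congr 1
      ext e
      simp
    have h3 : s / 2 * ((C ω).card : ℝ) ≤
        ∑ T ∈ C ω, ((T.filter (fun e => step ω T ≤ fc ω e)).card : ℝ) := by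
      calc s / 2 * ((C ω).card : ℝ) = ∑ _T ∈ C ω, s / 2 := by
            rw [Finset.sum_const, nsmul_eq_mul, mul_comm]
        _ ≤ _ := Finset.sum_le_sum (hlarge ω)
    calc s / 2 * ((C ω).card : ℝ)
        ≤ ∑ T ∈ C ω, ((T.filter (fun e => step ω T ≤ fc ω e)).card : ℝ) := h3
      _ = ∑ T ∈ C ω, ((T.filter (fun e => step ω T = fc ω e)).card : ℝ) := by
          exact Finset.sum_congr rfl fun T hT => by rw [h1 T hT]
      _ = ∑ e : α, (X e ω : ℝ) := by
          rw [← Nat.cast_sum, ← h2, Nat.cast_sum]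
  refine ⟨key, ?_⟩
  have hint1 : Integrable (fun ω => ∑ e : α, (X e ω : ℝ)) μ :=
    integrable_finset_sum _ fun e _ => hXint e
  have hle1 : s / 2 * ∫ ω, ((C ω).card : ℝ) ∂μ ≤ ∫ ω, ∑ e : α, (X e ω : ℝ) ∂μ := by
    rw [← integral_const_mul]
    exact integral_mono (hCint.const_mul _) hint1 key
  have hle2 : ∫ ω, ∑ e : α, (X e ω : ℝ) ∂μ ≤ 5 * (Fintype.card α : ℝ) := by
    rw [integral_finset_sum _ fun e _ => hXint e]
    calc ∑ e : α, ∫ ω, (X e ω : ℝ) ∂μ ≤ ∑ _e : α, (5 : ℝ) :=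
          Finset.sum_le_sum fun e _ => hXexp e
      _ = 5 * (Fintype.card α : ℝ) := by simp [mul_comm]
  rw [le_div_iff₀ hs]
  nlinarith [hle1.trans hle2]
end
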